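/- arXiv:2311.11804 — 5 statements merged into one kernel-verified Lean document; each statement's English description precedes it below -/
import Mathlib

section
/- Let M₁,…,M_L be nonsingular D×D integer matrices and let R be an lcrm of M₁,…,M_L. If m and m′ are integer vectors in N(R) such that m − m′ ∈ L(M_i) for every 1 ≤ i ≤ L, then m = m′. Consequently, an integer vector in N(R) is uniquely determined by its remainders modulo M₁,…,M_L (MD-CRT, Proposition 1). -/
open Matrix

noncomputable section

/-- Real cast of an integer matrix. -/
def rmat {D : ℕ} (A : Matrix (Fin D) (Fin D) ℤ) : Matrix (Fin D) (Fin D) ℝ :=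
  A.map Int.cast

/-- Real cast of an integer vector, viewed in Euclidean space. -/
def rvec {D : ℕ} (v : Fin D → ℤ) : EuclideanSpace ℝ (Fin D) :=
  WithLp.toLp 2 (fun i => (v i : ℝ))

/-- The lattice generated by a real matrix. -/
def latt {D : ℕ} (A : Matrix (Fin D) (Fin D) ℝ) : Set (EuclideanSpace ℝ (Fin D)) :=
  {v | ∃ n : Fin D → ℤ, v = A.mulVec fun i => (n i : ℝ)}

/-- Minimum (Euclidean) distance of the lattice generated by a real matrix. -/
def lamMin {D : ℕ} (A : Matrix (Fin D) (Fin D) ℝ) : ℝ :=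
  sInf {r | ∃ v ∈ latt A, v ≠ 0 ∧ ‖v‖ = r}

/-- The set of integer vectors of the lattice generated by an integer matrix. -/
def lattZ {D : ℕ} (A : Matrix (Fin D) (Fin D) ℤ) : Set (Fin D → ℤ) :=
  {v | ∃ n : Fin D → ℤ, v = A.mulVec n}

/-- N(A): the integer points in the fundamental parallelepiped of a real matrix A. -/
def NN {D : ℕ} (A : Matrix (Fin D) (Fin D) ℝ) : Set (Fin D → ℤ) :=
  {k | ∃ x : Fin D → ℝ, (∀ i, 0 ≤ x i ∧ x i < 1) ∧ (fun i => (k i : ℝ)) = A.mulVec x}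

/-- A is a left divisor of B (i.e. A⁻¹B is an integer matrix). -/
def LeftDvd {D : ℕ} (A B : Matrix (Fin D) (Fin D) ℤ) : Prop :=
  ∃ C : Matrix (Fin D) (Fin D) ℤ, B = A * C

/-- G is a greatest common left divisor of A and B. -/
def IsGcld {D : ℕ} (G A B : Matrix (Fin D) (Fin D) ℤ) : Prop :=
  G.det ≠ 0 ∧ LeftDvd G A ∧ LeftDvd G B ∧
    ∀ C : Matrix (Fin D) (Fin D) ℤ, C.det ≠ 0 → LeftDvd C A → LeftDvd C B → LeftDvd C G

/-- R is a (nonsingular) right multiple of B. -/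
def RightMulOf {D : ℕ} (R B : Matrix (Fin D) (Fin D) ℤ) : Prop :=
  ∃ P : Matrix (Fin D) (Fin D) ℤ, P.det ≠ 0 ∧ R = B * P

/-- R is a least common right multiple of the family M. -/
def IsLcrm {D : ℕ} {ι : Type*} (R : Matrix (Fin D) (Fin D) ℤ)
    (M : ι → Matrix (Fin D) (Fin D) ℤ) : Prop :=
  R.det ≠ 0 ∧ (∀ i, RightMulOf R (M i)) ∧
    ∀ R' : Matrix (Fin D) (Fin D) ℤ, R'.det ≠ 0 → (∀ i, RightMulOf R' (M i)) →
      RightMulOf R' R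

/-- Folding vector ⌊A⁻¹ m⌋ (element-wise floor). -/
def fold {D : ℕ} (A : Matrix (Fin D) (Fin D) ℤ) (m : Fin D → ℤ) : Fin D → ℤ :=
  fun i => ⌊((rmat A)⁻¹.mulVec fun j => (m j : ℝ)) i⌋

lemma mulVec_inj_of_det_ne_zero {D : ℕ} {S : Type*} [CommRing S] [IsDomain S]
    (A : Matrix (Fin D) (Fin D) S) (hA : A.det ≠ 0) {x y : Fin D → S}
    (hxy : A.mulVec x = A.mulVec y) : x = y := by
  have h2 : (A.adjugate * A).mulVec x = (A.adjugate * A).mulVec y := by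
    rw [← Matrix.mulVec_mulVec, ← Matrix.mulVec_mulVec, hxy]
  rw [Matrix.adjugate_mul] at h2
  funext i
  have h3 := congrFun h2 i
  simp [Matrix.smul_mulVec, Matrix.one_mulVec, Pi.smul_apply, smul_eq_mul] at h3
  exact h3.resolve_right hA

lemma cols_linearIndependent {D : ℕ} (A : Matrix (Fin D) (Fin D) ℤ) (hA : A.det ≠ 0) :
    LinearIndependent ℤ (fun j i => A i j) := by
  rw [Fintype.linearIndependent_iff]
  intro g hg j
  have h0 : A.mulVec g = A.mulVec 0 := by
    rw [Matrix.mulVec_zero]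
    funext i
    have := congrFun hg i
    simpa [Matrix.mulVec, dotProduct, Finset.sum_apply, mul_comm] using this
  exact congrFun (mulVec_inj_of_det_ne_zero A hA h0) j

/-- MD-CRT, Proposition 1: an integer vector in N(R), where R is an
lcrm of the moduli, is uniquely determined by its remainders modulo M₁,…,M_L. -/
theorem mdcrt_uniqueness {D L : ℕ} (hD : 0 < D)
    (M : Fin L → Matrix (Fin D) (Fin D) ℤ) (hM : ∀ i, (M i).det ≠ 0)
    (R : Matrix (Fin D) (Fin D) ℤ) (hR : IsLcrm R M)
    (m m' : Fin D → ℤ) (hm : m ∈ NN (rmat R)) (hm' : m' ∈ NN (rmat R))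
    (h : ∀ i, m - m' ∈ lattZ (M i)) : m = m' := by
  set v : Fin D → ℤ := m - m' with hvdef
  -- the span of v together with the columns of R
  set Λ : Submodule ℤ (Fin D → ℤ) :=
    Submodule.span ℤ ({v} ∪ Set.range (fun j i => R i j)) with hΛdef
  have hvΛ : v ∈ Λ := Submodule.subset_span (Or.inl rfl)
  have hcolΛ : ∀ j, (fun i => R i j) ∈ Λ := fun j =>
    Submodule.subset_span (Or.inr ⟨j, rfl⟩)
  have hΛle : ∀ i, Λ ≤ LinearMap.range (M i).mulVecLin := by
    intro i
    rw [hΛdef, Submodule.span_le]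
    rintro x (rfl | ⟨j, rfl⟩)
    · obtain ⟨n, hn⟩ := h i
      exact ⟨n, by rw [Matrix.mulVecLin_apply]; exact hn.symm⟩
    · obtain ⟨P, hPdet, hRP⟩ := hR.2.1 i
      refine ⟨fun k => P k j, ?_⟩
      funext i'
      rw [Matrix.mulVecLin_apply]
      simp [hRP, Matrix.mul_apply, Matrix.mulVec, dotProduct]
  obtain ⟨n, b⟩ := Submodule.basisOfPid (Pi.basisFun ℤ (Fin D)) Λ
  have hnD : n = D := by
    have h1 : n ≤ D := by
      have hli : LinearIndependent ℤ (fun j => ((b j : Fin D → ℤ))) :=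
        b.linearIndependent.map' Λ.subtype Λ.ker_subtype
      simpa using (Pi.basisFun ℤ (Fin D)).card_le_card_of_linearIndependent hli
    have h2 : D ≤ n := by
      have hli : LinearIndependent ℤ (fun j => (⟨fun i => R i j, hcolΛ j⟩ : Λ)) := by
        apply LinearIndependent.of_comp Λ.subtype
        exact cols_linearIndependent R hR.1
      simpa using b.card_le_card_of_linearIndependent hli
    omega
  symm at hnD
  subst hnD
  set B : Matrix (Fin D) (Fin D) ℤ := Matrix.of (fun i j => (b j : Fin D → ℤ) i) with hBdef
  -- every element of Λ is B *ᵥ c for some integer c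
  have hmemB : ∀ x, x ∈ Λ → ∃ c : Fin D → ℤ, x = B.mulVec c := by
    intro x hx
    refine ⟨fun j => b.repr ⟨x, hx⟩ j, ?_⟩
    have hrep := b.sum_repr ⟨x, hx⟩
    funext i
    have h0 := congrArg (fun z : Λ => (z : Fin D → ℤ) i) hrep
    simp only [AddSubmonoidClass.coe_finset_sum, Submodule.coe_smul, Finset.sum_apply,
      Pi.smul_apply, smul_eq_mul] at h0
    rw [← h0]
    simp [Matrix.mulVec, dotProduct, hBdef, mul_comm]
  -- R = B * Q for an integer matrix Q, hence det B ≠ 0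
  have hRQ : ∃ Q : Matrix (Fin D) (Fin D) ℤ, R = B * Q := by
    choose c hc using fun j => hmemB (fun i => R i j) (hcolΛ j)
    refine ⟨Matrix.of (fun k j => c j k), ?_⟩
    ext i j
    have := congrFun (hc j) i
    simpa [Matrix.mul_apply, Matrix.mulVec, dotProduct] using this
  obtain ⟨Q, hQ⟩ := hRQ
  have hBdet : B.det ≠ 0 := by
    intro h0
    apply hR.1
    rw [hQ, Matrix.det_mul, h0, zero_mul]
  -- B is a common right multiple of the M i
  have hcrm : ∀ i, RightMulOf B (M i) := by
    intro i
    choose d hd using fun j => hΛle i (b j).2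
    refine ⟨Matrix.of (fun k j => d j k), ?_, ?_⟩
    · intro h0
      apply hBdet
      have hBeq : B = M i * Matrix.of (fun k j => d j k) := by
        ext i' j
        have := congrFun (hd j) i'
        rw [Matrix.mulVecLin_apply] at this
        simpa [Matrix.mul_apply, Matrix.mulVec, dotProduct, hBdef] using this.symm
      rw [hBeq, Matrix.det_mul, h0, mul_zero]
    · ext i' j
      have := congrFun (hd j) i'
      rw [Matrix.mulVecLin_apply] at this
      simpa [Matrix.mul_apply, Matrix.mulVec, dotProduct, hBdef] using this.symm
  -- lcrm: B = R * P, so v ∈ lattZ R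
  obtain ⟨P, hPdet, hBP⟩ := hR.2.2 B hBdet hcrm
  obtain ⟨c, hc⟩ := hmemB v hvΛ
  set w : Fin D → ℤ := P.mulVec c with hwdef
  have hvRw : v = R.mulVec w := by
    rw [hc, hBP, hwdef, Matrix.mulVec_mulVec]
  -- now use the fundamental domain condition
  obtain ⟨x, hx01, hxeq⟩ := hm
  obtain ⟨x', hx01', hxeq'⟩ := hm'
  have hRdetR : (rmat R).det ≠ 0 := by
    have : (rmat R).det = ((R.det : ℤ) : ℝ) := ((Int.castRingHom ℝ).map_det R).symm
    rw [this]
    exact_mod_cast hR.1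
  have hkey : x - x' = fun i => (w i : ℝ) := by
    apply mulVec_inj_of_det_ne_zero (rmat R) hRdetR
    rw [Matrix.mulVec_sub, ← hxeq, ← hxeq']
    funext i
    have h5 := (Int.castRingHom ℝ).map_mulVec R w i
    rw [← hvRw] at h5
    have h6 : ((m i : ℝ) - (m' i : ℝ)) = ((v i : ℤ) : ℝ) := by simp [hvdef]
    show ((m i : ℝ) - (m' i : ℝ)) = _
    rw [h6]
    exact h5
  have hw0 : w = 0 := by
    funext i
    simp only [Pi.zero_apply]
    have hi := congrFun hkey i
    simp only [Pi.sub_apply] at hi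
    have h1 : (w i : ℝ) < 1 := by
      rw [← hi]
      have := (hx01 i).2
      have := (hx01' i).1
      linarith
    have h2 : (-1 : ℝ) < (w i : ℝ) := by
      rw [← hi]
      have := (hx01 i).1
      have := (hx01' i).2
      linarith
    have h1' : w i < 1 := by exact_mod_cast h1
    have h2' : -1 < w i := by exact_mod_cast h2
    omega
  have : v = 0 := by rw [hvRw, hw0, Matrix.mulVec_zero]
  have := sub_eq_zero.mp (hvdef ▸ this)
  exact this
end
end

section
/- Let M₁ and M₂ be nonsingular D×D integer matrices, let G be a gcld of M₁ and M₂, and let P and Q be D×D integer matrices satisfying the Bezout relation M₁P + M₂Q = G. If r₁, r₂ ∈ ℤ^D are such that G⁻¹(r₂ − r₁) is an integer vector, then the vector x = r₁ + M₁ P G⁻¹(r₂ − r₁) satisfies x − r₁ ∈ L(M₁) and x − r₂ ∈ L(M₂); that is, x simultaneously solves the congruences x ≡ r₁ (mod M₁) and x ≡ r₂ (mod M₂). -/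
open Matrix

noncomputable section

/-- the Bezout-based closed form x = r₁ + M₁PG⁻¹(r₂ − r₁)
simultaneously solves x ≡ r₁ (mod M₁) and x ≡ r₂ (mod M₂). -/
theorem bezout_solves_pair {D : ℕ} (hD : 0 < D)
    (M₁ M₂ G P Q : Matrix (Fin D) (Fin D) ℤ)
    (h₁ : M₁.det ≠ 0) (h₂ : M₂.det ≠ 0)
    (hG : IsGcld G M₁ M₂) (hBez : M₁ * P + M₂ * Q = G)
    (r₁ r₂ : Fin D → ℤ) (k : Fin D → ℤ) (hk : r₂ - r₁ = G.mulVec k) :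
    (r₁ + (M₁ * P).mulVec k) - r₁ ∈ lattZ M₁ ∧
      (r₁ + (M₁ * P).mulVec k) - r₂ ∈ lattZ M₂ := by
  constructor
  · exact ⟨P.mulVec k, by simp [Matrix.mulVec_mulVec]⟩
  · refine ⟨-(Q.mulVec k), ?_⟩
    have h : (M₁ * P).mulVec k + (M₂ * Q).mulVec k = G.mulVec k := by
      rw [← Matrix.add_mulVec, hBez]
    have hr2 : r₂ = r₁ + G.mulVec k := by rw [← hk]; abel
    have this2 : r₁ + (M₁ * P).mulVec k - r₂ = -((M₂ * Q).mulVec k) := by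
      rw [hr2, ← h]; abel
    rw [this2, Matrix.mulVec_neg, Matrix.mulVec_mulVec]
end
end

section
/- (Corollary 2, robustness part.) Let M₁,…,M_L (L ≥ 3) be distinct nonsingular D×D integer matrices with M₁ = M_L P for some nonsingular integer matrix P, and for i ≠ j let M_{ij} be a gcld of M_i and M_j. Then max_{1≤i≤L} min_{1≤j≤L, j≠i} λ(M_{ij}) ≤ max_{1≤i≤L−1} min_{1≤j≤L−1, j≠i} λ(M_{ij}); that is, including the redundant modulus M_L does not increase the reconstruction robustness bound. -/
open Matrix

noncomputable section

lemma rmat_mulVec_cast {D : ℕ} (C : Matrix (Fin D) (Fin D) ℤ) (n : Fin D → ℤ) :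
    (rmat C).mulVec (fun i => (n i : ℝ)) = fun i => ((C.mulVec n) i : ℝ) := by
  funext i
  simp [rmat, Matrix.mulVec, dotProduct]

lemma rmat_mul {D : ℕ} (A C : Matrix (Fin D) (Fin D) ℤ) :
    rmat (A * C) = rmat A * rmat C := by
  ext i j
  simp [rmat, Matrix.mul_apply]

lemma mulVec_ne_zero {D : ℕ} (B : Matrix (Fin D) (Fin D) ℝ) (hB : B.det ≠ 0)
    (x : Fin D → ℝ) (hx : x ≠ 0) : B.mulVec x ≠ 0 := by
  intro h
  apply hx
  have h2 := congrArg (B⁻¹.mulVec) h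
  rwa [Matrix.mulVec_mulVec, Matrix.nonsing_inv_mul B (isUnit_iff_ne_zero.mpr hB),
    Matrix.one_mulVec, Matrix.mulVec_zero] at h2

lemma lamMin_le_of_leftDvd {D : ℕ} (hD : 0 < D) {A B : Matrix (Fin D) (Fin D) ℤ}
    (hB : B.det ≠ 0) (h : LeftDvd A B) : lamMin (rmat A) ≤ lamMin (rmat B) := by
  obtain ⟨C, rfl⟩ := h
  apply csInf_le_csInf
  · exact ⟨0, by rintro r ⟨v, _, _, rfl⟩; exact norm_nonneg v⟩
  · -- nonempty
    have i0 : Fin D := ⟨0, hD⟩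
    set n : Fin D → ℤ := Pi.single (⟨0, hD⟩ : Fin D) 1 with hn
    have hx : (fun i => ((n i : ℝ))) ≠ (0 : Fin D → ℝ) := by
      intro hh
      have := congrFun hh ⟨0, hD⟩
      simp [hn] at this
    have hdet : (rmat (A * C)).det ≠ 0 := by
      have h3 : (rmat (A * C)).det = (((A * C).det : ℤ) : ℝ) := by
        exact (RingHom.map_det (Int.castRingHom ℝ) (A * C)).symm
      rw [h3]
      exact_mod_cast hB
    exact ⟨_, WithLp.toLp 2 ((rmat (A * C)).mulVec (fun i => (n i : ℝ))), ⟨n, rfl⟩,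
      fun h => mulVec_ne_zero _ hdet _ hx (congrArg WithLp.ofLp h), rfl⟩
  · rintro r ⟨v, ⟨n, hv⟩, hne, rfl⟩
    refine ⟨v, ⟨C.mulVec n, ?_⟩, hne, rfl⟩
    rw [hv, rmat_mul, ← Matrix.mulVec_mulVec, rmat_mulVec_cast]

/-- Corollary 2, robustness part: with M₁ = M_L P, including the
redundant modulus M_L does not increase the reconstruction robustness bound
max_i min_{j≠i} λ(M_{ij})/ (up to the common factor 1/4).  The moduli are
indexed by Fin (L+1), L+1 ≥ 3, with M₁ = M 0 and M_L = M (Fin.last L). -/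
theorem redundant_modulus_robustness {D L : ℕ} (hD : 0 < D) (hL : 2 ≤ L)
    (M : Fin (L + 1) → Matrix (Fin D) (Fin D) ℤ)
    (hdet : ∀ i, (M i).det ≠ 0)
    (hdistinct : ∀ i j, i ≠ j → M i ≠ M j)
    (P : Matrix (Fin D) (Fin D) ℤ) (hP : P.det ≠ 0)
    (hfac : M 0 = M (Fin.last L) * P)
    (G : Fin (L + 1) → Fin (L + 1) → Matrix (Fin D) (Fin D) ℤ)
    (hG : ∀ i j, i ≠ j → IsGcld (G i j) (M i) (M j)) :
    sSup {r | ∃ i : Fin (L + 1),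
        r = sInf {s | ∃ j, j ≠ i ∧ s = lamMin (rmat (G i j))}} ≤
    sSup {r | ∃ i : Fin (L + 1), i ≠ Fin.last L ∧
        r = sInf {s | ∃ j, j ≠ i ∧ j ≠ Fin.last L ∧ s = lamMin (rmat (G i j))}} := by
  -- abbreviations
  have hlnz : (Fin.last L : Fin (L+1)) ≠ 0 := by
    intro h
    have := congrArg Fin.val h
    simp [Fin.last] at this
    omega
  have hlam0 : ∀ (X : Matrix (Fin D) (Fin D) ℝ), 0 ≤ lamMin X := by
    intro X
    apply Real.sInf_nonneg
    rintro r ⟨v, -, -, rfl⟩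
    exact norm_nonneg v
  have hbddF : ∀ i : Fin (L+1),
      BddBelow {s | ∃ j, j ≠ i ∧ s = lamMin (rmat (G i j))} := by
    intro i
    exact ⟨0, by rintro s ⟨j, -, rfl⟩; exact hlam0 _⟩
  have hex : ∀ i : Fin (L+1), ∃ j : Fin (L+1), j ≠ i ∧ j ≠ Fin.last L := by
    intro i
    rcases eq_or_ne i 0 with rfl | h0
    · refine ⟨⟨1, by omega⟩, ?_, ?_⟩ <;>
        · intro h
          have := congrArg Fin.val h
          simp only [Fin.last, Fin.val_zero] at this
          omega
    · exact ⟨0, fun h => h0 h.symm, fun h => hlnz h.symm⟩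
  -- the RHS index set is finite, hence bounded above
  have hTfin : Set.Finite {r | ∃ i : Fin (L + 1), i ≠ Fin.last L ∧
      r = sInf {s | ∃ j, j ≠ i ∧ j ≠ Fin.last L ∧ s = lamMin (rmat (G i j))}} := by
    have hsub : {r | ∃ i : Fin (L + 1), i ≠ Fin.last L ∧
        r = sInf {s | ∃ j, j ≠ i ∧ j ≠ Fin.last L ∧ s = lamMin (rmat (G i j))}} ⊆
        (fun i : Fin (L+1) =>
          sInf {s | ∃ j, j ≠ i ∧ j ≠ Fin.last L ∧ s = lamMin (rmat (G i j))}) '' Set.univ := by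
      rintro r ⟨i, -, rfl⟩
      exact ⟨i, trivial, rfl⟩
    exact (Set.finite_univ.image _).subset hsub
  have hTbdd := hTfin.bddAbove
  -- key divisibility: for j ≠ 0, j ≠ last, G last j left-divides G 0 j
  have hkey : ∀ j : Fin (L+1), j ≠ 0 → j ≠ Fin.last L →
      lamMin (rmat (G (Fin.last L) j)) ≤ lamMin (rmat (G 0 j)) := by
    intro j hj0 hjl
    obtain ⟨hd0, -, -, hmax⟩ := hG 0 j (fun h => hj0 h.symm)
    obtain ⟨hdl, ⟨C1, hC1⟩, hdvdj, -⟩ := hG (Fin.last L) j (fun h => hjl h.symm)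
    refine lamMin_le_of_leftDvd hD hd0 ?_
    exact hmax _ hdl ⟨C1 * P, by rw [hfac, hC1, Matrix.mul_assoc]⟩ hdvdj
  apply csSup_le
  · exact ⟨_, 0, rfl⟩
  rintro r ⟨i, rfl⟩
  by_cases hi : i = Fin.last L
  · subst hi
    have h1 : sInf {s | ∃ j, j ≠ Fin.last L ∧ s = lamMin (rmat (G (Fin.last L) j))} ≤
        sInf {s | ∃ j, j ≠ (0 : Fin (L+1)) ∧ j ≠ Fin.last L ∧ s = lamMin (rmat (G 0 j))} := by
      apply le_csInf
      · obtain ⟨j, hj0, hjl⟩ := hex 0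
        exact ⟨_, j, hj0, hjl, rfl⟩
      · rintro s ⟨j, hj0, hjl, rfl⟩
        exact le_trans (csInf_le (hbddF _) ⟨j, hjl, rfl⟩) (hkey j hj0 hjl)
    exact le_trans h1 (le_csSup hTbdd ⟨0, Ne.symm hlnz, rfl⟩)
  · have h1 : sInf {s | ∃ j, j ≠ i ∧ s = lamMin (rmat (G i j))} ≤
        sInf {s | ∃ j, j ≠ i ∧ j ≠ Fin.last L ∧ s = lamMin (rmat (G i j))} := by
      apply csInf_le_csInf (hbddF i)
      · obtain ⟨j, hji, hjl⟩ := hex i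
        exact ⟨_, j, hji, hjl, rfl⟩
      · rintro s ⟨j, hji, -, rfl⟩
        exact ⟨j, hji, rfl⟩
    exact le_trans h1 (le_csSup hTbdd ⟨i, hi, rfl⟩)
end
end

section
/- (Corollary 3, individual remainder error bounds.) Let M₁,…,M_L (L ≥ 2) be distinct nonsingular D×D integer matrices, let M_{ij} be a gcld of M_i and M_j for i ≠ j, let R be an lcrm of M₁,…,M_L, and let l₀ ∈ {1,…,L} satisfy min_{j≠l₀} λ(M_{l₀j}) = max_{1≤i≤L} min_{j≠i} λ(M_{ij}). Let m ∈ ℤ^D have folding vectors n_i = ⌊M_i⁻¹m⌋ and remainders r_i = m − M_i n_i, with ⌊M_{l₀}⁻¹m⌋ ∈ N(M_{l₀}⁻¹R). Suppose the remainder errors satisfy ‖Δr_{l₀}‖₂ ≤ τ_{l₀} < min_{j≠l₀} λ(M_{l₀j})/4 and, for each i ≠ l₀, ‖Δr_i‖₂ ≤ τ_i ≤ λ(M_{l₀i})/2 − min_{j≠l₀} λ(M_{l₀j})/4, where r̃_i = r_i + Δr_i. Then for each j ≠ l₀, ‖Δr_j − Δr_{l₀}‖₂ < λ(M_{l₀j})/2,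 so r_j − r_{l₀} is the unique minimizer of ‖v − (r̃_j − r̃_{l₀})‖₂ over v ∈ L(M_{l₀j}); consequently {M_i n_i} are accurately determined as in Theorem 1, and the reconstruction m̃ = (1/L)∑_{i=1}^L (M_i n_i + r̃_i) satisfies ‖m̃ − m‖₂ ≤ (1/L)∑_{i=1}^L τ_i. -/
open Matrix

noncomputable section

/-- min_{j≠i} λ(L(G i j)), as an infimum of a (finite, nonempty) set of reals. -/
def minOver {D L : ℕ} (G : Fin L → Fin L → Matrix (Fin D) (Fin D) ℤ) (i : Fin L) : ℝ :=
  sInf {r | ∃ j, j ≠ i ∧ r = lamMin (rmat (G i j))}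

lemma rvec_sub {D : ℕ} (a b : Fin D → ℤ) : rvec (a - b) = rvec a - rvec b := by
  ext i; simp [rvec]

lemma rvec_mulVecZ {D : ℕ} (A : Matrix (Fin D) (Fin D) ℤ) (v : Fin D → ℤ) :
    rvec (A.mulVec v) = (rmat A).mulVec (fun i => (v i : ℝ)) := by
  funext i; simp [rvec, rmat, Matrix.mulVec, dotProduct]

lemma lamMin_le {D : ℕ} (A : Matrix (Fin D) (Fin D) ℝ) (v : EuclideanSpace ℝ (Fin D))
    (hv : v ∈ latt A) (h0 : v ≠ 0) : lamMin A ≤ ‖v‖ :=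
  csInf_le ⟨0, fun r ⟨u, _, _, hu⟩ => hu ▸ norm_nonneg u⟩ ⟨v, hv, h0, rfl⟩

lemma det_rmat {D : ℕ} (A : Matrix (Fin D) (Fin D) ℤ) : (rmat A).det = (A.det : ℝ) :=
  (RingHom.map_det (Int.castRingHom ℝ) A).symm

lemma isUnit_det_rmat {D : ℕ} {A : Matrix (Fin D) (Fin D) ℤ} (h : A.det ≠ 0) :
    IsUnit (rmat A).det := by
  rw [det_rmat]; exact isUnit_iff_ne_zero.mpr (by exact_mod_cast h)

/-- A vector in all the lattices L(M i) is in the lattice L(R) when R is an lcrm. -/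
lemma mem_lattZ_lcrm {D L : ℕ} (hD : 0 < D) (M : Fin L → Matrix (Fin D) (Fin D) ℤ)
    (hdet : ∀ i, (M i).det ≠ 0) (R : Matrix (Fin D) (Fin D) ℤ) (hR : IsLcrm R M)
    (w : Fin D → ℤ) (hw : ∀ i, w ∈ lattZ (M i)) : w ∈ lattZ R := by
  classical
  set i0 : Fin D := ⟨0, hD⟩
  set N : ℤ := ∏ i, (M i).det with hNdef
  have hN : N ≠ 0 := Finset.prod_ne_zero_iff.mpr fun i _ => hdet i
  set c : ℤ := (|w i0| + 1) * |N| with hcdef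
  have hNabs : 1 ≤ |N| := Int.one_le_abs hN
  have hcge : |w i0| + 1 ≤ c := by
    calc |w i0| + 1 = (|w i0| + 1) * 1 := by ring
    _ ≤ c := by
        apply mul_le_mul_of_nonneg_left hNabs
        positivity
  have hc0 : c ≠ 0 := by
    have := abs_nonneg (w i0); omega
  have hcw : c + w i0 ≠ 0 := by
    have := neg_abs_le (w i0); omega
  have hdvd : ∀ i, (M i).det ∣ c := fun i =>
    dvd_mul_of_dvd_right ((dvd_abs _ _).mpr (Finset.dvd_prod_of_mem _ (Finset.mem_univ i))) _
  set S : Matrix (Fin D) (Fin D) ℤ :=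
    c • (1 : Matrix (Fin D) (Fin D) ℤ) + Matrix.of (fun p q => if q = i0 then w p else 0)
    with hSdef
  have hSmul : ∀ v : Fin D → ℤ, S.mulVec v = fun p => c * v p + w p * v i0 := by
    intro v; funext p
    rw [hSdef, Matrix.add_mulVec, Matrix.smul_mulVec, Matrix.one_mulVec]
    simp [Matrix.mulVec, dotProduct, ite_mul, Finset.sum_ite_eq', smul_eq_mul]
  have hSdet : S.det ≠ 0 := by
    intro h
    obtain ⟨v, hv0, hv⟩ := Matrix.exists_mulVec_eq_zero_iff.mpr h
    rw [hSmul] at hv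
    have hvi0 : v i0 = 0 := by
      have := congrFun hv i0
      simp at this
      have h2 : (c + w i0) * v i0 = 0 := by linear_combination this
      rcases mul_eq_zero.mp h2 with h | h
      · exact absurd h hcw
      · exact h
    apply hv0
    funext p
    have := congrFun hv p
    simp [hvi0] at this
    rcases this with h | h
    · exact absurd h hc0
    · exact h
  have hMC : ∀ i, M i * ((c / (M i).det) • (M i).adjugate) = c • 1 := by
    intro i
    rw [Matrix.mul_smul, Matrix.mul_adjugate, smul_smul, Int.ediv_mul_cancel (hdvd i)]
  have hScrm : ∀ i, RightMulOf S (M i) := by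
    intro i
    obtain ⟨a, ha⟩ := hw i
    set P : Matrix (Fin D) (Fin D) ℤ :=
      (c / (M i).det) • (M i).adjugate + Matrix.of (fun p q => if q = i0 then a p else 0)
      with hPdef
    have hSeq : S = M i * P := by
      rw [hPdef, Matrix.mul_add, hMC i, hSdef]
      congr 1
      ext p q
      rw [Matrix.mul_apply]
      by_cases hq : q = i0
      · subst hq
        simp [ha, Matrix.mulVec, dotProduct]
      · simp [hq]
    refine ⟨P, fun h => hSdet ?_, hSeq⟩
    rw [hSeq, Matrix.det_mul, h, mul_zero]
  have hCcrm : ∀ i, RightMulOf (c • (1 : Matrix (Fin D) (Fin D) ℤ)) (M i) := by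
    intro i
    refine ⟨(c / (M i).det) • (M i).adjugate, fun h => ?_, (hMC i).symm⟩
    have : (c • (1 : Matrix (Fin D) (Fin D) ℤ)).det = 0 := by
      rw [← hMC i, Matrix.det_mul, h, mul_zero]
    rw [Matrix.det_smul, Matrix.det_one, mul_one] at this
    exact pow_ne_zero _ hc0 this
  have hcdet : (c • (1 : Matrix (Fin D) (Fin D) ℤ)).det ≠ 0 := by
    rw [Matrix.det_smul, Matrix.det_one, mul_one]
    exact pow_ne_zero _ hc0
  obtain ⟨Q, _, hQ⟩ := hR.2.2 S hSdet hScrm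
  obtain ⟨Q', _, hQ'⟩ := hR.2.2 _ hcdet hCcrm
  refine ⟨Q.mulVec (Pi.single i0 1) - Q'.mulVec (Pi.single i0 1), ?_⟩
  have h1 : S.mulVec (Pi.single i0 1) = R.mulVec (Q.mulVec (Pi.single i0 1)) := by
    rw [hQ, ← Matrix.mulVec_mulVec]
  have h2 : (c • (1 : Matrix (Fin D) (Fin D) ℤ)).mulVec (Pi.single i0 1)
      = R.mulVec (Q'.mulVec (Pi.single i0 1)) := by
    rw [hQ', ← Matrix.mulVec_mulVec]
  have h3 : w = S.mulVec (Pi.single i0 1)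
      - (c • (1 : Matrix (Fin D) (Fin D) ℤ)).mulVec (Pi.single i0 1) := by
    rw [hSmul, Matrix.smul_one_eq_diagonal]
    funext p
    simp [Matrix.mulVec_diagonal, Pi.single_apply, Matrix.diagonal_apply]
  rw [h3, h1, h2, ← Matrix.mulVec_sub]


lemma rvec_add {D : ℕ} (a b : Fin D → ℤ) : rvec (a + b) = rvec a + rvec b := by
  ext i; simp [rvec]

lemma latt_sub {D : ℕ} {A : Matrix (Fin D) (Fin D) ℝ} {u v : EuclideanSpace ℝ (Fin D)}
    (hu : u ∈ latt A) (hv : v ∈ latt A) : u - v ∈ latt A := by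
  obtain ⟨a, ha⟩ := hu
  obtain ⟨b, hb⟩ := hv
  refine ⟨a - b, ?_⟩
  rw [WithLp.ofLp_sub, ha, hb]
  funext i
  simp [Matrix.mulVec, dotProduct, Finset.sum_sub_distrib, mul_sub]

/-- Corollary 3: individual remainder error bounds. -/
theorem robust_mdcrt_individual_bounds {D L : ℕ} (hD : 0 < D) (hL : 2 ≤ L)
    (M : Fin L → Matrix (Fin D) (Fin D) ℤ)
    (hdet : ∀ i, (M i).det ≠ 0)
    (hdistinct : ∀ i j, i ≠ j → M i ≠ M j)
    (G : Fin L → Fin L → Matrix (Fin D) (Fin D) ℤ)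
    (hG : ∀ i j, i ≠ j → IsGcld (G i j) (M i) (M j))
    (R : Matrix (Fin D) (Fin D) ℤ) (hR : IsLcrm R M)
    (l₀ : Fin L)
    (hl₀ : minOver G l₀ = sSup {r | ∃ i, r = minOver G i})
    (m : Fin D → ℤ)
    (n : Fin L → Fin D → ℤ) (hn : ∀ i, n i = fold (M i) m)
    (r : Fin L → Fin D → ℤ) (hr : ∀ i, r i = m - (M i).mulVec (n i))
    (hrange : fold (M l₀) m ∈ NN ((rmat (M l₀))⁻¹ * rmat R))
    (Δr rt : Fin L → Fin D → ℤ) (hrt : ∀ i, rt i = r i + Δr i)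
    (τ : Fin L → ℝ)
    (hτ : ∀ i, ‖rvec (Δr i)‖ ≤ τ i)
    (hτl₀ : τ l₀ < minOver G l₀ / 4)
    (hτi : ∀ i, i ≠ l₀ → τ i ≤ lamMin (rmat (G l₀ i)) / 2 - minOver G l₀ / 4) :
    -- the paired remainder error differences are small enough
    (∀ j, j ≠ l₀ →
      ‖rvec (Δr j) - rvec (Δr l₀)‖ < lamMin (rmat (G l₀ j)) / 2) ∧
    -- so r_j − r_{l₀} is the unique minimizer of ‖v − (r̃_j − r̃_{l₀})‖₂ over L(M_{l₀j})
    (∀ j, j ≠ l₀ → rvec (r j - r l₀) ∈ latt (rmat (G l₀ j)) ∧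
      ∀ v ∈ latt (rmat (G l₀ j)), v ≠ rvec (r j - r l₀) →
        ‖rvec (r j - r l₀) - (rvec (rt j) - rvec (rt l₀))‖ <
          ‖v - (rvec (rt j) - rvec (rt l₀))‖) ∧
    -- {M_i n_i} are accurately determined as in Theorem 1
    ((M l₀).mulVec (n l₀) ∈ NN (rmat R) ∧ (M l₀).mulVec (n l₀) ∈ lattZ (M l₀) ∧
      (∀ j, j ≠ l₀ → (M l₀).mulVec (n l₀) - (r j - r l₀) ∈ lattZ (M j)) ∧
      (∀ z : Fin D → ℤ, z ∈ NN (rmat R) → z ∈ lattZ (M l₀) →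
        (∀ j, j ≠ l₀ → z - (r j - r l₀) ∈ lattZ (M j)) → z = (M l₀).mulVec (n l₀)) ∧
      (∀ j, j ≠ l₀ → (M j).mulVec (n j) = (M l₀).mulVec (n l₀) - (r j - r l₀))) ∧
    -- and the reconstruction satisfies ‖m̃ − m‖₂ ≤ (1/L) ∑ᵢ τᵢ
    ‖(L : ℝ)⁻¹ • (∑ i, rvec ((M i).mulVec (n i) + rt i)) - rvec m‖ ≤
      (L : ℝ)⁻¹ * ∑ i, τ i := by
  classical
  have part1 : ∀ j, j ≠ l₀ → ‖rvec (Δr j) - rvec (Δr l₀)‖ < lamMin (rmat (G l₀ j)) / 2 := by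
    intro j hj
    have h1 := hτ j
    have h2 := hτ l₀
    have h3 := hτi j hj
    have h4 := norm_sub_le (rvec (Δr j)) (rvec (Δr l₀))
    linarith
  have hrdiff : ∀ j, r j - r l₀ = (M l₀).mulVec (n l₀) - (M j).mulVec (n j) := by
    intro j; rw [hr j, hr l₀]; ring
  have hMn : ∀ j, (M j).mulVec (n j) = (M l₀).mulVec (n l₀) - (r j - r l₀) := by
    intro j; rw [hrdiff j]; ring
  have part2mem : ∀ j, j ≠ l₀ → rvec (r j - r l₀) ∈ latt (rmat (G l₀ j)) := by
    intro j hj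
    obtain ⟨C₁, hC₁⟩ := (hG l₀ j (Ne.symm hj)).2.1
    obtain ⟨C₂, hC₂⟩ := (hG l₀ j (Ne.symm hj)).2.2.1
    refine ⟨C₁.mulVec (n l₀) - C₂.mulVec (n j), ?_⟩
    have h5 : r j - r l₀ = (G l₀ j).mulVec (C₁.mulVec (n l₀) - C₂.mulVec (n j)) := by
      rw [hrdiff j, Matrix.mulVec_sub, Matrix.mulVec_mulVec, Matrix.mulVec_mulVec,
        ← hC₁, ← hC₂]
    rw [h5, rvec_mulVecZ]
  have part2 : ∀ j, j ≠ l₀ → rvec (r j - r l₀) ∈ latt (rmat (G l₀ j)) ∧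
      ∀ v ∈ latt (rmat (G l₀ j)), v ≠ rvec (r j - r l₀) →
        ‖rvec (r j - r l₀) - (rvec (rt j) - rvec (rt l₀))‖ <
          ‖v - (rvec (rt j) - rvec (rt l₀))‖ := by
    intro j hj
    refine ⟨part2mem j hj, fun v hv hvne => ?_⟩
    have hdd : rvec (r j - r l₀) - (rvec (rt j) - rvec (rt l₀)) =
        -(rvec (Δr j) - rvec (Δr l₀)) := by
      rw [hrt j, hrt l₀, rvec_sub, rvec_add, rvec_add]
      abel
    have hnorm1 : ‖rvec (r j - r l₀) - (rvec (rt j) - rvec (rt l₀))‖ =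
        ‖rvec (Δr j) - rvec (Δr l₀)‖ := by rw [hdd, norm_neg]
    have he : ‖rvec (Δr j) - rvec (Δr l₀)‖ < lamMin (rmat (G l₀ j)) / 2 := part1 j hj
    have hsubmem : v - rvec (r j - r l₀) ∈ latt (rmat (G l₀ j)) :=
      latt_sub hv (part2mem j hj)
    have hlam : lamMin (rmat (G l₀ j)) ≤ ‖v - rvec (r j - r l₀)‖ :=
      lamMin_le _ _ hsubmem (sub_ne_zero.mpr hvne)
    have htri : ‖v - rvec (r j - r l₀)‖ ≤ ‖v - (rvec (rt j) - rvec (rt l₀))‖ +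
        ‖rvec (r j - r l₀) - (rvec (rt j) - rvec (rt l₀))‖ := by
      have := norm_sub_le (v - (rvec (rt j) - rvec (rt l₀)))
        (rvec (r j - r l₀) - (rvec (rt j) - rvec (rt l₀)))
      have heq : v - (rvec (rt j) - rvec (rt l₀)) -
          (rvec (r j - r l₀) - (rvec (rt j) - rvec (rt l₀))) = v - rvec (r j - r l₀) := by
        abel
      rw [heq] at this
      linarith
    rw [hnorm1]
    linarith
  have hrangeMem : (M l₀).mulVec (n l₀) ∈ NN (rmat R) := by
    obtain ⟨x, hx, hxeq⟩ := hrange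
    refine ⟨x, hx, ?_⟩
    have h1 : (fun i => ((n l₀) i : ℝ)) = ((rmat (M l₀))⁻¹ * rmat R).mulVec x := by
      rw [hn l₀]; exact hxeq
    have h2 := congrArg (fun t => (rmat (M l₀)).mulVec t) h1
    rw [Matrix.mulVec_mulVec,
      Matrix.mul_nonsing_inv_cancel_left _ _ (isUnit_det_rmat (hdet l₀))] at h2
    calc (fun i => (((M l₀).mulVec (n l₀)) i : ℝ))
        = (rmat (M l₀)).mulVec (fun i => ((n l₀) i : ℝ)) := by
          funext i; exact congrFun (rvec_mulVecZ (M l₀) (n l₀)) i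
      _ = (rmat R).mulVec x := h2
  have uniq : ∀ z : Fin D → ℤ, z ∈ NN (rmat R) → z ∈ lattZ (M l₀) →
      (∀ j, j ≠ l₀ → z - (r j - r l₀) ∈ lattZ (M j)) → z = (M l₀).mulVec (n l₀) := by
    intro z hzNN hzl hzj
    have hwall : ∀ i, z - (M l₀).mulVec (n l₀) ∈ lattZ (M i) := by
      intro i
      by_cases hi : i = l₀
      · obtain ⟨a, ha⟩ := hzl
        rw [hi]
        exact ⟨a - n l₀, by rw [ha, Matrix.mulVec_sub]⟩
      · obtain ⟨b, hb⟩ := hzj i hi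
        refine ⟨b - n i, ?_⟩
        rw [Matrix.mulVec_sub, ← hb, hMn i]
        ring
    obtain ⟨cint, hcint⟩ := mem_lattZ_lcrm hD M hdet R hR _ hwall
    obtain ⟨x, hx, hxeq⟩ := hzNN
    obtain ⟨y, hy, hyeq⟩ := hrangeMem
    have hRunit := isUnit_det_rmat hR.1
    have hreal : (rmat R).mulVec (fun i => (cint i : ℝ)) = (rmat R).mulVec (x - y) := by
      funext p
      have hz := congrFun hxeq p
      have hm := congrFun hyeq p
      have hc := congrFun hcint p
      have h6 : ((R.mulVec cint) p : ℝ) = (rmat R).mulVec (fun i => (cint i : ℝ)) p :=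
        congrFun (rvec_mulVecZ R cint) p
      rw [Matrix.mulVec_sub, Pi.sub_apply, ← hz, ← hm, ← h6, ← hc]
      push_cast [Pi.sub_apply]
      ring
    have hinj : (fun i => (cint i : ℝ)) = x - y := by
      have h7 := congrArg (fun t => (rmat R)⁻¹.mulVec t) hreal
      simpa [Matrix.mulVec_mulVec, Matrix.nonsing_inv_mul _ hRunit,
        Matrix.one_mulVec] using h7
    have hc0 : cint = 0 := by
      funext i
      have h1 : ((cint i : ℝ)) = x i - y i := congrFun hinj i
      have hx1 := (hx i).1; have hx2 := (hx i).2
      have hy1 := (hy i).1; have hy2 := (hy i).2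
      have hl : (-1 : ℝ) < (cint i : ℝ) := by rw [h1]; linarith
      have hu : ((cint i : ℝ)) < 1 := by rw [h1]; linarith
      have hl' : (-1 : ℤ) < cint i := by exact_mod_cast hl
      have hu' : cint i < 1 := by exact_mod_cast hu
      show cint i = 0
      omega
    have h8 : z - (M l₀).mulVec (n l₀) = 0 := by
      rw [hcint, hc0, Matrix.mulVec_zero]
    have := sub_eq_zero.mp h8
    exact this
  refine ⟨part1, part2, ⟨hrangeMem, ⟨n l₀, rfl⟩, ?_, uniq, fun j _ => hMn j⟩, ?_⟩
  · intro j hj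
    rw [← hMn j]
    exact ⟨n j, rfl⟩
  · have hL0 : (0 : ℝ) < (L : ℝ) := by
      have : 0 < L := by omega
      exact_mod_cast this
    have hterm : ∀ i, (M i).mulVec (n i) + rt i = m + Δr i := by
      intro i; rw [hrt i, hr i]; ring
    have hsum : (∑ i, rvec ((M i).mulVec (n i) + rt i)) =
        (L : ℝ) • rvec m + ∑ i, rvec (Δr i) := by
      calc (∑ i, rvec ((M i).mulVec (n i) + rt i))
          = ∑ i : Fin L, (rvec m + rvec (Δr i)) := by
            refine Finset.sum_congr rfl fun i _ => ?_
            rw [hterm i, rvec_add]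
        _ = (L : ℝ) • rvec m + ∑ i, rvec (Δr i) := by
            rw [Finset.sum_add_distrib, Finset.sum_const, Finset.card_univ, Fintype.card_fin]
            congr 1
            exact (Nat.cast_smul_eq_nsmul ℝ L (rvec m)).symm
    rw [hsum, smul_add, inv_smul_smul₀ (ne_of_gt hL0), add_sub_cancel_left]
    rw [norm_smul]
    have h9 : ‖∑ i, rvec (Δr i)‖ ≤ ∑ i, τ i := by
      calc ‖∑ i, rvec (Δr i)‖ ≤ ∑ i, ‖rvec (Δr i)‖ := norm_sum_le _ _
        _ ≤ ∑ i, τ i := Finset.sum_le_sum fun i _ => hτ i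
    have h10 : ‖(L : ℝ)⁻¹‖ = (L : ℝ)⁻¹ := by
      rw [Real.norm_eq_abs, abs_of_pos (by positivity)]
    rw [h10]
    exact mul_le_mul_of_nonneg_left h9 (by positivity)
end
end

section
/- Let M be a nonsingular D×D real matrix and Ψ₁,…,Ψ_L nonsingular D×D integer matrices. Suppose a real vector 𝗆 ∈ ℝ^D can be written as 𝗆 = MΨ_i n_i + 𝗋_i with n_i ∈ ℤ^D and 𝗋_i ∈ ℝ^D for each 1 ≤ i ≤ L. Let Ψ_{1i} be a gcld of Ψ₁ and Ψ_i for 2 ≤ i ≤ L. Then 𝗋_i − 𝗋₁ ∈ L(MΨ_{1i}) for every 2 ≤ i ≤ L. -/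
open Matrix

noncomputable section

/-- A plain vector viewed as a point of Euclidean space. -/
def toEuc {D : ℕ} (v : Fin D → ℝ) : EuclideanSpace ℝ (Fin D) := WithLp.toLp 2 v

/-- for the real-valued decomposition 𝗆 = MΨᵢnᵢ + 𝗋ᵢ, paired
remainder differences lie in the lattice generated by M·gcld(Ψ₁,Ψᵢ).
Index 0 plays the role of index 1 in the paper. -/
theorem real_remainder_difference_in_lattice {D L : ℕ} [NeZero L] (hD : 0 < D)
    (M : Matrix (Fin D) (Fin D) ℝ) (hM : M.det ≠ 0)
    (Ψ : Fin L → Matrix (Fin D) (Fin D) ℤ) (hΨ : ∀ i, (Ψ i).det ≠ 0)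
    (msf : EuclideanSpace ℝ (Fin D))
    (n : Fin L → Fin D → ℤ) (rsf : Fin L → EuclideanSpace ℝ (Fin D))
    (hdecomp : ∀ i, msf =
      toEuc ((M * rmat (Ψ i)).mulVec fun j => (n i j : ℝ)) + rsf i)
    (G : Fin L → Matrix (Fin D) (Fin D) ℤ)
    (hG : ∀ i, i ≠ 0 → IsGcld (G i) (Ψ 0) (Ψ i)) :
    ∀ i, i ≠ 0 → rsf i - rsf 0 ∈ latt (M * rmat (G i)) := by
  intro i hi
  obtain ⟨-, ⟨C0, hC0⟩, ⟨Ci, hCi⟩, -⟩ := hG i hi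
  refine ⟨C0.mulVec (n 0) - Ci.mulVec (n i), ?_⟩
  have hr : rsf i - rsf 0 = toEuc ((M * rmat (Ψ 0)).mulVec fun j => (n 0 j : ℝ))
      - toEuc ((M * rmat (Ψ i)).mulVec fun j => (n i j : ℝ)) := by
    have h0 := hdecomp 0
    have h1 := hdecomp i
    rw [h0] at h1
    have : rsf i = toEuc ((M * rmat (Ψ 0)).mulVec fun j => (n 0 j : ℝ)) + rsf 0
        - toEuc ((M * rmat (Ψ i)).mulVec fun j => (n i j : ℝ)) := by
      rw [h1]; abel
    rw [this]; abel
  rw [hr]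
  have hcast : (fun j => ((C0.mulVec (n 0) - Ci.mulVec (n i)) j : ℝ)) =
      (rmat C0).mulVec (fun k => ((n 0 k : ℝ))) - (rmat Ci).mulVec (fun k => ((n i k : ℝ))) := by
    funext j
    simp [rmat, Matrix.mulVec, dotProduct]
  have hG0 : rmat (Ψ 0) = rmat (G i) * rmat C0 := by
    rw [hC0]; exact Matrix.map_mul (f := Int.castRingHom ℝ)
  have hGi : rmat (Ψ i) = rmat (G i) * rmat Ci := by
    rw [hCi]; exact Matrix.map_mul (f := Int.castRingHom ℝ)
  have : toEuc ((M * rmat (Ψ 0)).mulVec fun j => (n 0 j : ℝ))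
      - toEuc ((M * rmat (Ψ i)).mulVec fun j => (n i j : ℝ))
      = toEuc ((M * rmat (G i)).mulVec ((rmat C0).mulVec (fun k => ((n 0 k : ℝ)))
          - (rmat Ci).mulVec (fun k => ((n i k : ℝ))))) := by
    have e : ∀ x y : Fin D → ℝ, toEuc x - toEuc y = toEuc (x - y) := fun _ _ => rfl
    rw [e]
    congr 1
    simp only [Matrix.mulVec_sub, hG0, hGi, ← Matrix.mulVec_mulVec, Matrix.mul_assoc]
  rw [this, hcast]
  rfl
end
end
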